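/- Let F₀, s : ℝ² → ℝ be real analytic with ∂F₀/∂H₂(0) ≠ 0. Then there exists ρ > 0 such that det Dω(H) ≠ 0 for every H ∈ P with |H| < ρ. -/

import Mathlib

open Real Filter Topology MeasureTheory

/-- The Euclidean norm `|H| = √(H₁² + H₂²)` on `ℝ²`. -/
noncomputable def nrm (H : ℝ × ℝ) : ℝ := Real.sqrt (H.1 ^ 2 + H.2 ^ 2)

/-- The slit plane `P = ℝ² \ {(t,0) : t ≥ 0}`. -/
def slitP : Set (ℝ × ℝ) := {H | ¬ (0 ≤ H.1 ∧ H.2 = 0)}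

/-- The branch of the polar angle with values in `(0, 2π)` on the slit plane:
`argS (r cos θ, r sin θ) = θ` for `r > 0`, `θ ∈ (0, 2π)`. -/
noncomputable def argS (H : ℝ × ℝ) : ℝ :=
  Real.pi + Complex.arg (-(H.1 + H.2 * Complex.I))

/-- The partial derivative with respect to the first variable. -/
noncomputable def pd₁ (f : ℝ × ℝ → ℝ) (H : ℝ × ℝ) : ℝ := fderiv ℝ f H (1, 0)

/-- The partial derivative with respect to the second variable. -/
noncomputable def pd₂ (f : ℝ × ℝ → ℝ) (H : ℝ × ℝ) : ℝ := fderiv ℝ f H (0, 1)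

/-- `D(H) = (1/(2π))(ln|H| + 1) + ∂s/∂H₂(H)`. -/
noncomputable def Dfun (s : ℝ × ℝ → ℝ) (H : ℝ × ℝ) : ℝ :=
  (1 / (2 * Real.pi)) * (Real.log (nrm H) + 1) + pd₂ s H

/-- First component of the frequency map. -/
noncomputable def ω₁ (F₀ s : ℝ × ℝ → ℝ) (H : ℝ × ℝ) : ℝ :=
  pd₁ F₀ H - pd₂ F₀ H * ((1 / (2 * Real.pi)) * argS H + pd₁ s H) / Dfun s H

/-- Second component of the frequency map. -/
noncomputable def ω₂ (F₀ s : ℝ × ℝ → ℝ) (H : ℝ × ℝ) : ℝ :=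
  pd₂ F₀ H / Dfun s H

/-- The Jacobian matrix `Dω(H)` of the frequency map, with entries `∂ωᵢ/∂Hⱼ(H)`. -/
noncomputable def Dω (F₀ s : ℝ × ℝ → ℝ) (H : ℝ × ℝ) : Matrix (Fin 2) (Fin 2) ℝ :=
  !![pd₁ (ω₁ F₀ s) H, pd₂ (ω₁ F₀ s) H;
     pd₁ (ω₂ F₀ s) H, pd₂ (ω₂ F₀ s) H]

-- generic directional partial derivative lemmas
lemma pdv_add (f g : ℝ × ℝ → ℝ) (H v : ℝ × ℝ) (hf : DifferentiableAt ℝ f H)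
    (hg : DifferentiableAt ℝ g H) :
    fderiv ℝ (fun x => f x + g x) H v = fderiv ℝ f H v + fderiv ℝ g H v := by
  rw [fderiv_fun_add hf hg]; rfl

lemma pdv_sub (f g : ℝ × ℝ → ℝ) (H v : ℝ × ℝ) (hf : DifferentiableAt ℝ f H)
    (hg : DifferentiableAt ℝ g H) :
    fderiv ℝ (fun x => f x - g x) H v = fderiv ℝ f H v - fderiv ℝ g H v := by
  rw [fderiv_fun_sub hf hg]; rfl

lemma pdv_mul (f g : ℝ × ℝ → ℝ) (H v : ℝ × ℝ) (hf : DifferentiableAt ℝ f H)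
    (hg : DifferentiableAt ℝ g H) :
    fderiv ℝ (fun x => f x * g x) H v
      = fderiv ℝ f H v * g H + f H * fderiv ℝ g H v := by
  rw [fderiv_fun_mul hf hg]
  simp [ContinuousLinearMap.add_apply, ContinuousLinearMap.smul_apply]
  ring

lemma pdv_inv (g : ℝ × ℝ → ℝ) (H v : ℝ × ℝ) (hg : DifferentiableAt ℝ g H)
    (h0 : g H ≠ 0) :
    fderiv ℝ (fun x => (g x)⁻¹) H v = -(fderiv ℝ g H v) / (g H)^2 := by
  have h : HasFDerivAt (fun x => (g x)⁻¹) (-(g H ^ 2)⁻¹ • fderiv ℝ g H) H :=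
    (hasDerivAt_inv h0).comp_hasFDerivAt H hg.hasFDerivAt
  rw [h.fderiv]
  simp [ContinuousLinearMap.smul_apply]
  ring

lemma pdv_div (f g : ℝ × ℝ → ℝ) (H v : ℝ × ℝ) (hf : DifferentiableAt ℝ f H)
    (hg : DifferentiableAt ℝ g H) (h0 : g H ≠ 0) :
    fderiv ℝ (fun x => f x / g x) H v
      = (fderiv ℝ f H v * g H - f H * fderiv ℝ g H v) / (g H)^2 := by
  have : (fun x => f x / g x) = fun x => f x * (g x)⁻¹ := by
    funext x; rw [div_eq_mul_inv]
  rw [this, pdv_mul f (fun x => (g x)⁻¹) H v hf (hg.inv h0), pdv_inv g H v hg h0]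
  field_simp
  ring

lemma pdv_const_mul (c : ℝ) (g : ℝ × ℝ → ℝ) (H v : ℝ × ℝ) (hg : DifferentiableAt ℝ g H) :
    fderiv ℝ (fun x => c * g x) H v = c * fderiv ℝ g H v := by
  rw [fderiv_const_mul hg]; simp

lemma pdv_const_add (c : ℝ) (g : ℝ × ℝ → ℝ) (H v : ℝ × ℝ) (hg : DifferentiableAt ℝ g H) :
    fderiv ℝ (fun x => c + g x) H v = fderiv ℝ g H v := by
  rw [fderiv_const_add]

lemma q_pos {H : ℝ × ℝ} (h : H ≠ 0) : 0 < H.1 ^ 2 + H.2 ^ 2 := by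
  have h' : ¬(H.1 = 0 ∧ H.2 = 0) := fun hc => h (Prod.ext hc.1 hc.2)
  rcases not_and_or.mp h' with h1 | h2
  · have : H.1 ≠ 0 := h1; positivity
  · have : H.2 ≠ 0 := h2; positivity

lemma hasFDerivAt_q (H : ℝ × ℝ) :
    HasFDerivAt (fun x : ℝ × ℝ => x.1 ^ 2 + x.2 ^ 2)
      ((2 * H.1) • ContinuousLinearMap.fst ℝ ℝ ℝ
        + (2 * H.2) • ContinuousLinearMap.snd ℝ ℝ ℝ) H := by
  have h1 : HasFDerivAt (fun x : ℝ × ℝ => x.1) (ContinuousLinearMap.fst ℝ ℝ ℝ) H :=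
    hasFDerivAt_fst
  have h2 : HasFDerivAt (fun x : ℝ × ℝ => x.2) (ContinuousLinearMap.snd ℝ ℝ ℝ) H :=
    hasFDerivAt_snd
  have := (h1.fun_mul h1).fun_add (h2.fun_mul h2)
  refine (this.congr_fderiv ?_).congr_of_eventuallyEq
    (Filter.Eventually.of_forall fun x => by simp only [sq])
  ext v <;> simp [ContinuousLinearMap.add_apply] <;> ring

lemma hasFDerivAt_logNrm {H : ℝ × ℝ} (h : H ≠ 0) :
    ∃ L : ℝ × ℝ →L[ℝ] ℝ, HasFDerivAt (fun x => Real.log (nrm x)) L H ∧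
      L (1, 0) = H.1 / (H.1 ^ 2 + H.2 ^ 2) ∧ L (0, 1) = H.2 / (H.1 ^ 2 + H.2 ^ 2) := by
  have hq := q_pos h
  have heq : (fun x : ℝ × ℝ => Real.log (nrm x))
      = fun x => Real.log (x.1 ^ 2 + x.2 ^ 2) / 2 := by
    funext x
    rw [nrm, Real.log_sqrt (by positivity)]
  have hlog := (Real.hasDerivAt_log hq.ne').comp_hasFDerivAt H (hasFDerivAt_q H)
  have hlog2 : HasFDerivAt (fun x : ℝ × ℝ => Real.log (x.1 ^ 2 + x.2 ^ 2) / 2)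
      ((2:ℝ)⁻¹ • ((H.1 ^ 2 + H.2 ^ 2)⁻¹ • ((2 * H.1) • ContinuousLinearMap.fst ℝ ℝ ℝ
        + (2 * H.2) • ContinuousLinearMap.snd ℝ ℝ ℝ))) H := by
    simpa [div_eq_inv_mul] using hlog.const_mul (2:ℝ)⁻¹
  refine ⟨_, heq ▸ hlog2, ?_, ?_⟩ <;>
    simp [ContinuousLinearMap.smul_apply, ContinuousLinearMap.add_apply] <;>
    field_simp <;> ring

lemma slitP_w {H : ℝ × ℝ} (h : H ∈ slitP) :
    (-(H.1 + H.2 * Complex.I)) ∈ Complex.slitPlane := by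
  rw [Complex.mem_slitPlane_iff]
  simp only [Complex.neg_re, Complex.neg_im, Complex.add_re, Complex.add_im,
    Complex.ofReal_re, Complex.ofReal_im, Complex.mul_re, Complex.mul_im,
    Complex.I_re, Complex.I_im]
  rcases not_and_or.mp h with h1 | h2
  · left; push_neg at h1; simpa using h1
  · right; simpa using h2

lemma slitP_ne_zero {H : ℝ × ℝ} (h : H ∈ slitP) : H ≠ 0 := by
  rintro rfl; exact h ⟨le_refl 0, rfl⟩

lemma hasFDerivAt_argS {H : ℝ × ℝ} (h : H ∈ slitP) :
    ∃ L : ℝ × ℝ →L[ℝ] ℝ, HasFDerivAt argS L H ∧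
      L (1, 0) = -H.2 / (H.1 ^ 2 + H.2 ^ 2) ∧ L (0, 1) = H.1 / (H.1 ^ 2 + H.2 ^ 2) := by
  have hw := slitP_w h
  set w : ℂ := H.1 + H.2 * Complex.I with hwdef
  have hw0 : w ≠ 0 := by
    intro h0
    exact Complex.slitPlane_ne_zero hw (by rw [h0, neg_zero])
  -- the inner real-linear map
  set m : ℝ × ℝ →L[ℝ] ℂ := -(Complex.equivRealProdCLM.symm.toContinuousLinearMap) with hm
  have hmapp : ∀ x : ℝ × ℝ, m x = -(x.1 + x.2 * Complex.I) := by
    intro x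
    simp [hm, Complex.equivRealProdCLM_symm_apply]
  have hmH : HasFDerivAt (fun x : ℝ × ℝ => -((x.1 : ℂ) + x.2 * Complex.I)) m H := by
    have := m.hasFDerivAt (x := H)
    exact this.congr_of_eventuallyEq (Filter.Eventually.of_forall fun x => (hmapp x).symm)
  have hlog := (Complex.hasDerivAt_log hw).comp_hasFDerivAt H hmH
  have him := (Complex.imCLM.hasFDerivAt (x := Complex.log (-w))).comp H hlog
  have hfin := him.const_add Real.pi
  have heq : argS = fun x : ℝ × ℝ => Real.pi + (Complex.log (-((x.1 : ℂ) + x.2 * Complex.I))).im := by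
    funext x
    rw [argS, Complex.log_im]
  refine ⟨_, heq ▸ hfin, ?_, ?_⟩ <;>
  · show Complex.imCLM (((-w)⁻¹ • m) _) = _
    rw [ContinuousLinearMap.smul_apply, hmapp]
    simp only [Complex.imCLM_apply, smul_eq_mul]
    rw [show ((-w)⁻¹ : ℂ) = -w⁻¹ by rw [inv_neg]]
    simp only [hwdef]
    simp [Complex.inv_im, Complex.inv_re, Complex.normSq_add_mul_I]

lemma ana_pdv (f : ℝ × ℝ → ℝ) (hf : ∀ x, AnalyticAt ℝ f x) (v : ℝ × ℝ) (x : ℝ × ℝ) :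
    AnalyticAt ℝ (fun H => fderiv ℝ f H v) x := by
  have h1 : AnalyticAt ℝ (fderiv ℝ f) x := (hf x).fderiv
  exact ((ContinuousLinearMap.apply ℝ ℝ v).analyticAt _).comp h1

lemma pdv_pdv_eq (f : ℝ × ℝ → ℝ) (hf : ∀ x, AnalyticAt ℝ f x) (v w H : ℝ × ℝ) :
    fderiv ℝ (fun y => fderiv ℝ f y v) H w = fderiv ℝ (fderiv ℝ f) H w v := by
  have hc : DifferentiableAt ℝ (fderiv ℝ f) H := ((hf H).fderiv).differentiableAt
  have := fderiv_clm_apply (c := fderiv ℝ f) (u := fun _ => v) hc (differentiableAt_const v)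
  rw [this]
  simp

lemma symm_snd (f : ℝ × ℝ → ℝ) (hf : ∀ x, AnalyticAt ℝ f x) (v w H : ℝ × ℝ) :
    fderiv ℝ (fun y => fderiv ℝ f y v) H w = fderiv ℝ (fun y => fderiv ℝ f y w) H v := by
  rw [pdv_pdv_eq f hf v w H, pdv_pdv_eq f hf w v H]
  have hsymm : IsSymmSndFDerivAt ℝ f H :=
    ((hf H).contDiffAt (n := 2)).isSymmSndFDerivAt (by norm_num)
  exact hsymm.eq w v

/-- Abbreviation for the explicit polynomial expression equal to `r² D³ det Dω`. -/
noncomputable def gE (c a1 a2 b1 b2 s11 s12 s22 b D H1 H2 n2 : ℝ) : ℝ :=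
  (D * n2) * (D * (a1 * b2 - a2 * b1))
  - b * ( (D * H2) * (c * a1) - (D * H1) * (c * (a2 + b1)) - (D * H2) * (c * b2)
        + (D * n2) * (a1 * s22 - (a2 + b1) * s12 + b2 * s11) )
  + b ^ 2 * ( -c ^ 2 + c * H2 * (s11 - s22) - 2 * c * H1 * s12
        + n2 * (s11 * s22 - s12 ^ 2) )

lemma key_identity (F₀ s : ℝ × ℝ → ℝ) (hF : ∀ x, AnalyticAt ℝ F₀ x)
    (hs : ∀ x, AnalyticAt ℝ s x) {H : ℝ × ℝ} (h : H ∈ slitP) (hd : Dfun s H ≠ 0) :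
    gE (1 / (2 * Real.pi)) (pd₁ (pd₁ F₀) H) (pd₂ (pd₁ F₀) H)
      (pd₁ (pd₂ F₀) H) (pd₂ (pd₂ F₀) H)
      (pd₁ (pd₁ s) H) (pd₂ (pd₁ s) H) (pd₂ (pd₂ s) H)
      (pd₂ F₀ H) (Dfun s H) H.1 H.2 (nrm H ^ 2)
    = nrm H ^ 2 * (Dfun s H) ^ 3 * (Dω F₀ s H).det := by
  set c : ℝ := 1 / (2 * Real.pi) with hc
  have hH0 : H ≠ 0 := slitP_ne_zero h
  have hr2 : 0 < H.1 ^ 2 + H.2 ^ 2 := q_pos hH0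
  set r2 : ℝ := H.1 ^ 2 + H.2 ^ 2 with hr2def
  obtain ⟨L, hL, hL1, hL2⟩ := hasFDerivAt_logNrm hH0
  obtain ⟨M, hM, hM1, hM2⟩ := hasFDerivAt_argS h
  have dLog : DifferentiableAt ℝ (fun x => Real.log (nrm x)) H := hL.differentiableAt
  have dArg : DifferentiableAt ℝ argS H := hM.differentiableAt
  have dPs1 : DifferentiableAt ℝ (pd₁ s) H := (ana_pdv s hs (1, 0) H).differentiableAt
  have dPs2 : DifferentiableAt ℝ (pd₂ s) H := (ana_pdv s hs (0, 1) H).differentiableAt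
  have dPa : DifferentiableAt ℝ (pd₁ F₀) H := (ana_pdv F₀ hF (1, 0) H).differentiableAt
  have dPb : DifferentiableAt ℝ (pd₂ F₀) H := (ana_pdv F₀ hF (0, 1) H).differentiableAt
  -- the A function
  set Af : (ℝ × ℝ) → ℝ := fun x => c * argS x + pd₁ s x with hAf
  have dA : DifferentiableAt ℝ Af H := (dArg.const_mul c).add dPs1
  -- the D function
  have hDfun : Dfun s = fun x => c * (Real.log (nrm x) + 1) + pd₂ s x := rfl
  have dD : DifferentiableAt ℝ (Dfun s) H := by
    rw [hDfun]; exact ((dLog.add_const 1).const_mul c).add dPs2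
  -- partials of log nrm
  have hLog1 : fderiv ℝ (fun x => Real.log (nrm x)) H (1, 0) = H.1 / r2 := by
    rw [hL.fderiv]; exact hL1
  have hLog2 : fderiv ℝ (fun x => Real.log (nrm x)) H (0, 1) = H.2 / r2 := by
    rw [hL.fderiv]; exact hL2
  have hArg1 : fderiv ℝ argS H (1, 0) = -H.2 / r2 := by rw [hM.fderiv]; exact hM1
  have hArg2 : fderiv ℝ argS H (0, 1) = H.1 / r2 := by rw [hM.fderiv]; exact hM2
  -- partials of Dfun
  have hD1 : pd₁ (Dfun s) H = c * (H.1 / r2) + pd₁ (pd₂ s) H := by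
    show fderiv ℝ (Dfun s) H (1, 0) = _
    rw [hDfun]
    rw [pdv_add _ _ _ _ ((dLog.add_const 1).const_mul c) dPs2,
      pdv_const_mul c _ _ _ (dLog.add_const 1)]
    have : fderiv ℝ (fun x => Real.log (nrm x) + 1) H = fderiv ℝ (fun x => Real.log (nrm x)) H :=
      fderiv_add_const 1
    rw [this, hLog1]
    rfl
  have hD2 : pd₂ (Dfun s) H = c * (H.2 / r2) + pd₂ (pd₂ s) H := by
    show fderiv ℝ (Dfun s) H (0, 1) = _
    rw [hDfun]
    rw [pdv_add _ _ _ _ ((dLog.add_const 1).const_mul c) dPs2,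
      pdv_const_mul c _ _ _ (dLog.add_const 1)]
    have : fderiv ℝ (fun x => Real.log (nrm x) + 1) H = fderiv ℝ (fun x => Real.log (nrm x)) H :=
      fderiv_add_const 1
    rw [this, hLog2]
    rfl
  -- partials of Af
  have hA1 : pd₁ Af H = c * (-H.2 / r2) + pd₁ (pd₁ s) H := by
    show fderiv ℝ Af H (1, 0) = _
    rw [hAf, pdv_add _ _ _ _ (dArg.const_mul c) dPs1, pdv_const_mul c _ _ _ dArg, hArg1]
    rfl
  have hA2 : pd₂ Af H = c * (H.1 / r2) + pd₂ (pd₁ s) H := by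
    show fderiv ℝ Af H (0, 1) = _
    rw [hAf, pdv_add _ _ _ _ (dArg.const_mul c) dPs1, pdv_const_mul c _ _ _ dArg, hArg2]
    rfl
  -- symmetry of second partials of s
  have hsym : pd₁ (pd₂ s) H = pd₂ (pd₁ s) H := by
    show fderiv ℝ (fun y => fderiv ℝ s y (0, 1)) H (1, 0)
      = fderiv ℝ (fun y => fderiv ℝ s y (1, 0)) H (0, 1)
    exact symm_snd s hs (0, 1) (1, 0) H
  -- partials of ω₂
  have hω₂ : ω₂ F₀ s = fun x => pd₂ F₀ x / Dfun s x := rfl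
  have ho21 : pd₁ (ω₂ F₀ s) H
      = (pd₁ (pd₂ F₀) H * Dfun s H - pd₂ F₀ H * pd₁ (Dfun s) H) / (Dfun s H) ^ 2 := by
    show fderiv ℝ (ω₂ F₀ s) H (1, 0) = _
    rw [hω₂, pdv_div _ _ _ _ dPb dD hd]
    rfl
  have ho22 : pd₂ (ω₂ F₀ s) H
      = (pd₂ (pd₂ F₀) H * Dfun s H - pd₂ F₀ H * pd₂ (Dfun s) H) / (Dfun s H) ^ 2 := by
    show fderiv ℝ (ω₂ F₀ s) H (0, 1) = _
    rw [hω₂, pdv_div _ _ _ _ dPb dD hd]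
    rfl
  -- partials of ω₁
  have hω₁ : ω₁ F₀ s = fun x => pd₁ F₀ x - pd₂ F₀ x * Af x / Dfun s x := rfl
  have dNum : DifferentiableAt ℝ (fun x => pd₂ F₀ x * Af x) H := dPb.mul dA
  have dQuot : DifferentiableAt ℝ (fun x => pd₂ F₀ x * Af x / Dfun s x) H := by
    have he : (fun x => pd₂ F₀ x * Af x / Dfun s x)
        = fun x => (pd₂ F₀ x * Af x) * (Dfun s x)⁻¹ := by
      funext x; rw [div_eq_mul_inv]
    rw [he]; exact dNum.mul (dD.inv hd)
  have ho11 : pd₁ (ω₁ F₀ s) H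
      = pd₁ (pd₁ F₀) H - ((pd₁ (pd₂ F₀) H * Af H + pd₂ F₀ H * pd₁ Af H) * Dfun s H
          - pd₂ F₀ H * Af H * pd₁ (Dfun s) H) / (Dfun s H) ^ 2 := by
    show fderiv ℝ (ω₁ F₀ s) H (1, 0) = _
    rw [hω₁, pdv_sub _ _ _ _ dPa dQuot,
      pdv_div _ _ _ _ dNum dD hd, pdv_mul _ _ _ _ dPb dA]
    rfl
  have ho12 : pd₂ (ω₁ F₀ s) H
      = pd₂ (pd₁ F₀) H - ((pd₂ (pd₂ F₀) H * Af H + pd₂ F₀ H * pd₂ Af H) * Dfun s H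
          - pd₂ F₀ H * Af H * pd₂ (Dfun s) H) / (Dfun s H) ^ 2 := by
    show fderiv ℝ (ω₁ F₀ s) H (0, 1) = _
    rw [hω₁, pdv_sub _ _ _ _ dPa dQuot,
      pdv_div _ _ _ _ dNum dD hd, pdv_mul _ _ _ _ dPb dA]
    rfl
  -- wrap up
  have hn2 : nrm H ^ 2 = r2 := Real.sq_sqrt (le_of_lt hr2)
  rw [Dω, Matrix.det_fin_two_of, ho11, ho12, ho21, ho22, hD1, hD2, hA1, hA2, hsym, hn2, gE]
  field_simp
  ring

/-- If `F₀`, `s` are real analytic and `∂F₀/∂H₂(0) ≠ 0`, then `det Dω(H) ≠ 0` for every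
`H` in the slit plane with `|H|` small enough. -/
theorem stmt10 (F₀ s : ℝ × ℝ → ℝ) (hF : ∀ x, AnalyticAt ℝ F₀ x)
    (hs : ∀ x, AnalyticAt ℝ s x) (hb : pd₂ F₀ (0, 0) ≠ 0) :
    ∃ ρ > 0, ∀ H ∈ slitP, nrm H < ρ → (Dω F₀ s H).det ≠ 0 := by
  set c : ℝ := 1 / (2 * Real.pi) with hc
  have hπ := Real.pi_pos
  have hcpos : 0 < c := by positivity
  set l : Filter (ℝ × ℝ) := 𝓝[≠] (0 : ℝ × ℝ) with hl
  -- continuity of nrm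
  have hnrm_cont : Continuous nrm := by
    unfold nrm
    exact Real.continuous_sqrt.comp ((continuous_fst.pow 2).add (continuous_snd.pow 2))
  have hnrm0 : nrm 0 = 0 := by simp [nrm]
  have hnrmT : Tendsto nrm l (𝓝 0) := by
    have := (hnrm_cont.tendsto 0).mono_left (nhdsWithin_le_nhds (s := {(0:ℝ×ℝ)}ᶜ))
    rwa [hnrm0] at this
  have hnrm_pos : ∀ H : ℝ × ℝ, H ≠ 0 → 0 < nrm H := fun H hH =>
    Real.sqrt_pos.mpr (q_pos hH)
  have hnrmW : Tendsto nrm l (𝓝[>] 0) := by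
    rw [tendsto_nhdsWithin_iff]
    refine ⟨hnrmT, ?_⟩
    filter_upwards [eventually_mem_nhdsWithin] with H hH
    exact hnrm_pos H hH
  -- tendsto of continuous coordinate pieces
  have hH1T : Tendsto (fun H : ℝ × ℝ => H.1) l (𝓝 0) := by
    have := (continuous_fst.tendsto (0 : ℝ × ℝ)).mono_left (nhdsWithin_le_nhds (s := {(0:ℝ×ℝ)}ᶜ))
    simpa using this
  have hH2T : Tendsto (fun H : ℝ × ℝ => H.2) l (𝓝 0) := by
    have := (continuous_snd.tendsto (0 : ℝ × ℝ)).mono_left (nhdsWithin_le_nhds (s := {(0:ℝ×ℝ)}ᶜ))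
    simpa using this
  -- analytic pieces
  have anaA : ∀ v : ℝ × ℝ, ∀ x, AnalyticAt ℝ (fun H => fderiv ℝ F₀ H v) x :=
    fun v x => ana_pdv F₀ hF v x
  have anaS : ∀ v : ℝ × ℝ, ∀ x, AnalyticAt ℝ (fun H => fderiv ℝ s H v) x :=
    fun v x => ana_pdv s hs v x
  have cont_pd : ∀ (f : ℝ × ℝ → ℝ), (∀ x, AnalyticAt ℝ f x) → ∀ v : ℝ × ℝ,
      Tendsto (fun H => fderiv ℝ f H v) l (𝓝 (fderiv ℝ f 0 v)) :=
    fun f hf v => ((ana_pdv f hf v 0).continuousAt.tendsto).mono_left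
      (nhdsWithin_le_nhds (s := {(0:ℝ×ℝ)}ᶜ))
  have tb : Tendsto (pd₂ F₀) l (𝓝 (pd₂ F₀ 0)) := cont_pd F₀ hF (0, 1)
  have ts2 : Tendsto (pd₂ s) l (𝓝 (pd₂ s 0)) := cont_pd s hs (0, 1)
  have ta1 : Tendsto (pd₁ (pd₁ F₀)) l (𝓝 (pd₁ (pd₁ F₀) 0)) :=
    cont_pd (pd₁ F₀) (fun x => ana_pdv F₀ hF (1, 0) x) (1, 0)
  have ta2 : Tendsto (pd₂ (pd₁ F₀)) l (𝓝 (pd₂ (pd₁ F₀) 0)) :=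
    cont_pd (pd₁ F₀) (fun x => ana_pdv F₀ hF (1, 0) x) (0, 1)
  have tb1 : Tendsto (pd₁ (pd₂ F₀)) l (𝓝 (pd₁ (pd₂ F₀) 0)) :=
    cont_pd (pd₂ F₀) (fun x => ana_pdv F₀ hF (0, 1) x) (1, 0)
  have tb2 : Tendsto (pd₂ (pd₂ F₀)) l (𝓝 (pd₂ (pd₂ F₀) 0)) :=
    cont_pd (pd₂ F₀) (fun x => ana_pdv F₀ hF (0, 1) x) (0, 1)
  have ts11 : Tendsto (pd₁ (pd₁ s)) l (𝓝 (pd₁ (pd₁ s) 0)) :=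
    cont_pd (pd₁ s) (fun x => ana_pdv s hs (1, 0) x) (1, 0)
  have ts12 : Tendsto (pd₂ (pd₁ s)) l (𝓝 (pd₂ (pd₁ s) 0)) :=
    cont_pd (pd₁ s) (fun x => ana_pdv s hs (1, 0) x) (0, 1)
  have ts22 : Tendsto (pd₂ (pd₂ s)) l (𝓝 (pd₂ (pd₂ s) 0)) :=
    cont_pd (pd₂ s) (fun x => ana_pdv s hs (0, 1) x) (0, 1)
  -- x log x → 0
  have hxlog : Tendsto (fun x : ℝ => Real.log x * x) (𝓝[>] 0) (𝓝 0) := by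
    have := tendsto_log_mul_rpow_nhdsGT_zero one_pos
    simpa [Real.rpow_one] using this
  have T0 : Tendsto (fun H => Real.log (nrm H) * nrm H) l (𝓝 0) := hxlog.comp hnrmW
  -- D * nrm → 0
  have hT : Tendsto (fun H => Dfun s H * nrm H) l (𝓝 0) := by
    have h1 : Tendsto (fun H => c * (Real.log (nrm H) * nrm H) + c * nrm H
        + pd₂ s H * nrm H) l (𝓝 (c * 0 + c * 0 + pd₂ s 0 * 0)) :=
      ((T0.const_mul c).add (hnrmT.const_mul c)).add (ts2.mul hnrmT)
    have h2 : ∀ H, c * (Real.log (nrm H) * nrm H) + c * nrm H + pd₂ s H * nrm H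
        = Dfun s H * nrm H := fun H => by rw [Dfun]; ring
    have := h1.congr h2
    simpa using this
  -- bounds |H.i| ≤ nrm H
  have habs1 : ∀ H : ℝ × ℝ, |H.1| ≤ nrm H := fun H => by
    rw [nrm, ← Real.sqrt_sq_eq_abs]
    exact Real.sqrt_le_sqrt (by nlinarith [sq_nonneg H.2])
  have habs2 : ∀ H : ℝ × ℝ, |H.2| ≤ nrm H := fun H => by
    rw [nrm, ← Real.sqrt_sq_eq_abs]
    exact Real.sqrt_le_sqrt (by nlinarith [sq_nonneg H.1])
  have hTabs : Tendsto (fun H => |Dfun s H * nrm H|) l (𝓝 0) := by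
    have := hT.abs; simpa using this
  have hDH1 : Tendsto (fun H => Dfun s H * H.1) l (𝓝 0) := by
    apply squeeze_zero_norm _ hTabs
    intro H
    rw [Real.norm_eq_abs, abs_mul, abs_mul]
    exact mul_le_mul_of_nonneg_left ((habs1 H).trans (le_abs_self _)) (abs_nonneg _)
  have hDH2 : Tendsto (fun H => Dfun s H * H.2) l (𝓝 0) := by
    apply squeeze_zero_norm _ hTabs
    intro H
    rw [Real.norm_eq_abs, abs_mul, abs_mul]
    exact mul_le_mul_of_nonneg_left ((habs2 H).trans (le_abs_self _)) (abs_nonneg _)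
  -- D → -∞
  have hDbot : Tendsto (Dfun s) l atBot := by
    have hlogc : Tendsto (fun H => Real.log (nrm H)) l atBot :=
      Real.tendsto_log_nhdsGT_zero.comp hnrmW
    have h1 : Tendsto (fun H => Real.log (nrm H) + 1) l atBot :=
      tendsto_atBot_add_const_right l 1 hlogc
    have h2 : Tendsto (fun H => c * (Real.log (nrm H) + 1)) l atBot :=
      tendsto_const_mul_atBot_of_pos hcpos |>.mpr h1
    have hev : ∀ᶠ H in l, pd₂ s H ≤ pd₂ s 0 + 1 := by
      filter_upwards [ts2.eventually (eventually_le_nhds (lt_add_one _))] with H hH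
      exact hH
    have h3 : Tendsto (fun H => c * (Real.log (nrm H) + 1) + pd₂ s H) l atBot :=
      tendsto_atBot_add_right_of_ge' l (pd₂ s 0 + 1) h2 hev
    exact h3
  -- the big limit
  set b0 : ℝ := pd₂ F₀ 0 with hb0def
  have hb0 : b0 ≠ 0 := hb
  -- model function with convergent building blocks
  set gM : (ℝ × ℝ) → ℝ := fun H =>
    ((Dfun s H * nrm H) * (Dfun s H * nrm H))
        * (pd₁ (pd₁ F₀) H * pd₂ (pd₂ F₀) H - pd₂ (pd₁ F₀) H * pd₁ (pd₂ F₀) H)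
    - pd₂ F₀ H * ( (Dfun s H * H.2) * (c * pd₁ (pd₁ F₀) H)
        - (Dfun s H * H.1) * (c * (pd₂ (pd₁ F₀) H + pd₁ (pd₂ F₀) H))
        - (Dfun s H * H.2) * (c * pd₂ (pd₂ F₀) H)
        + ((Dfun s H * nrm H) * nrm H)
          * (pd₁ (pd₁ F₀) H * pd₂ (pd₂ s) H
            - (pd₂ (pd₁ F₀) H + pd₁ (pd₂ F₀) H) * pd₂ (pd₁ s) H
            + pd₂ (pd₂ F₀) H * pd₁ (pd₁ s) H) )
    + (pd₂ F₀ H * pd₂ F₀ H) * ( -c ^ 2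
        + c * H.2 * (pd₁ (pd₁ s) H - pd₂ (pd₂ s) H)
        - 2 * c * H.1 * pd₂ (pd₁ s) H
        + (nrm H * nrm H) * (pd₁ (pd₁ s) H * pd₂ (pd₂ s) H - pd₂ (pd₁ s) H ^ 2) )
    with hgM
  have hgMT : Tendsto gM l (𝓝 (
    (0 * 0) * (pd₁ (pd₁ F₀) 0 * pd₂ (pd₂ F₀) 0 - pd₂ (pd₁ F₀) 0 * pd₁ (pd₂ F₀) 0)
    - b0 * ( 0 * (c * pd₁ (pd₁ F₀) 0)
        - 0 * (c * (pd₂ (pd₁ F₀) 0 + pd₁ (pd₂ F₀) 0))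
        - 0 * (c * pd₂ (pd₂ F₀) 0)
        + (0 * 0) * (pd₁ (pd₁ F₀) 0 * pd₂ (pd₂ s) 0
            - (pd₂ (pd₁ F₀) 0 + pd₁ (pd₂ F₀) 0) * pd₂ (pd₁ s) 0
            + pd₂ (pd₂ F₀) 0 * pd₁ (pd₁ s) 0) )
    + (b0 * b0) * ( -c ^ 2
        + c * 0 * (pd₁ (pd₁ s) 0 - pd₂ (pd₂ s) 0)
        - 2 * c * 0 * pd₂ (pd₁ s) 0
        + (0 * 0) * (pd₁ (pd₁ s) 0 * pd₂ (pd₂ s) 0 - pd₂ (pd₁ s) 0 ^ 2) ))) := by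
    refine Tendsto.add (Tendsto.sub ?_ ?_) ?_
    · exact (hT.mul hT).mul ((ta1.mul tb2).sub (ta2.mul tb1))
    · refine tb.mul ?_
      refine Tendsto.add (Tendsto.sub (Tendsto.sub ?_ ?_) ?_) ?_
      · exact hDH2.mul (ta1.const_mul c)
      · exact hDH1.mul ((ta2.add tb1).const_mul c)
      · exact hDH2.mul (tb2.const_mul c)
      · exact ((hT.mul hnrmT).mul
          (((ta1.mul ts22).sub ((ta2.add tb1).mul ts12)).add (tb2.mul ts11)))
    · refine (tb.mul tb).mul ?_
      refine Tendsto.add (Tendsto.sub (Tendsto.add tendsto_const_nhds ?_) ?_) ?_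
      · exact (hH2T.const_mul c).mul (ts11.sub ts22)
      · exact (hH1T.const_mul (2 * c)).mul ts12
      · exact (hnrmT.mul hnrmT).mul ((ts11.mul ts22).sub (Tendsto.pow ts12 2))
  have hVeq : ((0 * 0) * (pd₁ (pd₁ F₀) 0 * pd₂ (pd₂ F₀) 0 - pd₂ (pd₁ F₀) 0 * pd₁ (pd₂ F₀) 0)
    - b0 * ( 0 * (c * pd₁ (pd₁ F₀) 0)
        - 0 * (c * (pd₂ (pd₁ F₀) 0 + pd₁ (pd₂ F₀) 0))
        - 0 * (c * pd₂ (pd₂ F₀) 0)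
        + (0 * 0) * (pd₁ (pd₁ F₀) 0 * pd₂ (pd₂ s) 0
            - (pd₂ (pd₁ F₀) 0 + pd₁ (pd₂ F₀) 0) * pd₂ (pd₁ s) 0
            + pd₂ (pd₂ F₀) 0 * pd₁ (pd₁ s) 0) )
    + (b0 * b0) * ( -c ^ 2
        + c * 0 * (pd₁ (pd₁ s) 0 - pd₂ (pd₂ s) 0)
        - 2 * c * 0 * pd₂ (pd₁ s) 0
        + (0 * 0) * (pd₁ (pd₁ s) 0 * pd₂ (pd₂ s) 0 - pd₂ (pd₁ s) 0 ^ 2) ))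
      = -(b0 ^ 2 * c ^ 2) := by ring
  have hVne : -(b0 ^ 2 * c ^ 2) ≠ 0 := by
    simp only [neg_ne_zero]
    exact mul_ne_zero (pow_ne_zero 2 hb0) (pow_ne_zero 2 (ne_of_gt hcpos))
  rw [hVeq] at hgMT
  -- gM equals the gE composite
  have hgMeq : ∀ H : ℝ × ℝ, gM H
      = gE c (pd₁ (pd₁ F₀) H) (pd₂ (pd₁ F₀) H) (pd₁ (pd₂ F₀) H) (pd₂ (pd₂ F₀) H)
          (pd₁ (pd₁ s) H) (pd₂ (pd₁ s) H) (pd₂ (pd₂ s) H)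
          (pd₂ F₀ H) (Dfun s H) H.1 H.2 (nrm H ^ 2) := by
    intro H
    rw [hgM, gE]
    ring
  have hgE : Tendsto (fun H =>
      gE c (pd₁ (pd₁ F₀) H) (pd₂ (pd₁ F₀) H) (pd₁ (pd₂ F₀) H) (pd₂ (pd₂ F₀) H)
          (pd₁ (pd₁ s) H) (pd₂ (pd₁ s) H) (pd₂ (pd₂ s) H)
          (pd₂ F₀ H) (Dfun s H) H.1 H.2 (nrm H ^ 2)) l (𝓝 (-(b0 ^ 2 * c ^ 2))) :=
    hgMT.congr hgMeq
  -- final eventual statement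
  have hevD : ∀ᶠ H in l, Dfun s H ≤ -1 := hDbot.eventually (eventually_le_atBot (-1))
  have hevG : ∀ᶠ H in l, gE c (pd₁ (pd₁ F₀) H) (pd₂ (pd₁ F₀) H) (pd₁ (pd₂ F₀) H)
      (pd₂ (pd₂ F₀) H) (pd₁ (pd₁ s) H) (pd₂ (pd₁ s) H) (pd₂ (pd₂ s) H)
      (pd₂ F₀ H) (Dfun s H) H.1 H.2 (nrm H ^ 2) ≠ 0 :=
    hgE.eventually_ne hVne
  have hev := hevD.and hevG
  rw [hl, eventually_nhdsWithin_iff, Metric.eventually_nhds_iff] at hev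
  obtain ⟨ε, hε, hball⟩ := hev
  refine ⟨ε, hε, fun H hHs hHn => ?_⟩
  have hH0 : H ≠ 0 := slitP_ne_zero hHs
  have hdist : dist H 0 < ε := by
    rw [dist_zero_right, Prod.norm_def]
    refine lt_of_le_of_lt (max_le ?_ ?_) hHn
    · exact (Real.norm_eq_abs _) ▸ habs1 H
    · exact (Real.norm_eq_abs _) ▸ habs2 H
  obtain ⟨hDle, hGne⟩ := hball hdist hH0
  have hDne : Dfun s H ≠ 0 := by linarith
  have hkey := key_identity F₀ s hF hs hHs hDne
  intro hdet
  rw [hdet, mul_zero] at hkey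
  exact hGne hkey
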